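/- arXiv:2010.07624 — 2 statements merged into one kernel-verified Lean document; each statement's English description precedes it below -/
import Mathlib

section
/- Let x(·,ϑ) solve the pantograph equation x'(t) = a x(t) + b x(ϑt), x(0) = x₀, and let ẋ(·,ϑ) = ∂x/∂ϑ solve ẋ'(t) = a ẋ(t) + b ẋ(ϑt) + b t [a x(ϑt) + b x(ϑ²t)], ẋ(0) = 0. Then as t → 0, ẋ(t,ϑ) = ½ b t² x₀(a+b) + O(t³); in particular, if x₀ ≠ 0, b ≠ 0 and a+b ≠ 0, there exist constants c, C > 0 and δ > 0 such that c t² ≤ |ẋ(t,ϑ)| ≤ C t² for all t ∈ (0, δ]. -/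
open Set

lemma mono_aux {F : ℝ → ℝ} {F' : ℝ → ℝ} {δ t : ℝ}
    (hF : ∀ s ∈ Icc (0:ℝ) δ, HasDerivAt F (F' s) s)
    (hF' : ∀ s ∈ Icc (0:ℝ) δ, 0 ≤ F' s)
    (ht : t ∈ Icc (0:ℝ) δ) : F 0 ≤ F t := by
  have hsub : Icc (0:ℝ) t ⊆ Icc 0 δ := Icc_subset_Icc le_rfl ht.2
  have hmono : MonotoneOn F (Icc (0:ℝ) t) := by
    apply monotoneOn_of_deriv_nonneg (convex_Icc 0 t)
    · exact fun s hs => (hF s (hsub hs)).continuousAt.continuousWithinAt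
    · intro s hs
      rw [interior_Icc] at hs
      exact (hF s (hsub ⟨hs.1.le, hs.2.le⟩)).differentiableAt.differentiableWithinAt
    · intro s hs
      rw [interior_Icc] at hs
      rw [(hF s (hsub ⟨hs.1.le, hs.2.le⟩)).deriv]
      exact hF' s (hsub ⟨hs.1.le, hs.2.le⟩)
  exact hmono ⟨le_rfl, ht.1⟩ ⟨ht.1, le_rfl⟩ ht.1

lemma abs_le_of_deriv_abs_le {f g : ℝ → ℝ} {f' g' : ℝ → ℝ} {δ : ℝ}
    (hf : ∀ s ∈ Icc (0:ℝ) δ, HasDerivAt f (f' s) s)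
    (hg : ∀ s ∈ Icc (0:ℝ) δ, HasDerivAt g (g' s) s)
    (hle : ∀ s ∈ Icc (0:ℝ) δ, |f' s| ≤ g' s)
    (hf0 : f 0 = 0) (hg0 : g 0 = 0) :
    ∀ t ∈ Icc (0:ℝ) δ, |f t| ≤ g t := by
  intro t ht
  have h1 : (fun s => g s - f s) 0 ≤ (fun s => g s - f s) t :=
    mono_aux (fun s hs => (hg s hs).sub (hf s hs))
      (fun s hs => by
        have := (abs_le.mp (hle s hs)).2; simpa using sub_nonneg.mpr this) ht
  have h2 : (fun s => g s + f s) 0 ≤ (fun s => g s + f s) t :=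
    mono_aux (fun s hs => (hg s hs).add (hf s hs))
      (fun s hs => by
        have := (abs_le.mp (hle s hs)).1; simpa using by linarith) ht
  simp only [hf0, hg0] at h1 h2
  rw [abs_le]; constructor <;> [linarith; linarith]

set_option maxHeartbeats 1600000 in
/-- Small-time expansion of the ϑ-derivative of the pantograph solution:
`ẋ(t,ϑ) = ½ b t² x₀ (a+b) + O(t³)`, with matching two-sided `t²` bounds
under condition 𝒜. -/
theorem pantograph_theta_derivative_expansion (a b ϑ x₀ : ℝ) (hϑ : ϑ ∈ Ioo (0 : ℝ) 1)
    (x xdot : ℝ → ℝ)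
    (hx0 : x 0 = x₀)
    (hode : ∀ t : ℝ, 0 ≤ t → HasDerivAt x (a * x t + b * x (ϑ * t)) t)
    (hxdot0 : xdot 0 = 0)
    (hdode : ∀ t : ℝ, 0 ≤ t → HasDerivAt xdot
      (a * xdot t + b * xdot (ϑ * t) + b * t * (a * x (ϑ * t) + b * x (ϑ ^ 2 * t))) t) :
    (∃ C > (0 : ℝ), ∃ δ > (0 : ℝ), ∀ t ∈ Icc (0 : ℝ) δ,
      |xdot t - (1 / 2) * b * t ^ 2 * x₀ * (a + b)| ≤ C * t ^ 3) ∧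
    (x₀ ≠ 0 → b ≠ 0 → a + b ≠ 0 →
      ∃ c > (0 : ℝ), ∃ C > (0 : ℝ), ∃ δ > (0 : ℝ), ∀ t ∈ Ioc (0 : ℝ) δ,
        c * t ^ 2 ≤ |xdot t| ∧ |xdot t| ≤ C * t ^ 2) := by
  obtain ⟨hϑ0, hϑ1⟩ := hϑ
  -- membership helpers
  have hmem : ∀ {t : ℝ}, t ∈ Icc (0:ℝ) 1 → ϑ * t ∈ Icc (0:ℝ) 1 := by
    intro t ht
    exact ⟨mul_nonneg hϑ0.le ht.1, le_trans (mul_le_of_le_one_left ht.1 hϑ1.le) ht.2⟩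
  have hmem2 : ∀ {t : ℝ}, t ∈ Icc (0:ℝ) 1 → ϑ ^ 2 * t ∈ Icc (0:ℝ) 1 := by
    intro t ht
    have : ϑ ^ 2 * t = ϑ * (ϑ * t) := by ring
    rw [this]; exact hmem (hmem ht)
  -- boundedness of x
  have hxc : ContinuousOn x (Icc (0:ℝ) 1) :=
    fun t ht => (hode t ht.1).continuousAt.continuousWithinAt
  obtain ⟨M, hM⟩ := isCompact_Icc.exists_bound_of_continuousOn hxc
  have hM' : ∀ t ∈ Icc (0:ℝ) 1, |x t| ≤ M := by
    intro t ht; simpa [Real.norm_eq_abs] using hM t ht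
  have hM0 : 0 ≤ M := le_trans (abs_nonneg _) (hM' 0 ⟨le_rfl, zero_le_one⟩)
  -- boundedness of xdot
  have hdc : ContinuousOn xdot (Icc (0:ℝ) 1) :=
    fun t ht => (hdode t ht.1).continuousAt.continuousWithinAt
  obtain ⟨M₂, hM₂⟩ := isCompact_Icc.exists_bound_of_continuousOn hdc
  have hM₂' : ∀ t ∈ Icc (0:ℝ) 1, |xdot t| ≤ M₂ := by
    intro t ht; simpa [Real.norm_eq_abs] using hM₂ t ht
  have hM₂0 : 0 ≤ M₂ := le_trans (abs_nonneg _) (hM₂' 0 ⟨le_rfl, zero_le_one⟩)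
  obtain ⟨L, hLdef⟩ : ∃ y : ℝ, y = (|a| + |b|) * M := ⟨_, rfl⟩
  have hL0 : 0 ≤ L := hLdef ▸ mul_nonneg (by positivity) hM0
  -- Step A: |x t - x₀| ≤ L * t on [0,1]
  have hA : ∀ t ∈ Icc (0:ℝ) 1, |x t - x₀| ≤ L * t := by
    apply abs_le_of_deriv_abs_le
      (f' := fun s => a * x s + b * x (ϑ * s)) (g' := fun _ => L)
    · exact fun s hs => (hode s hs.1).sub_const x₀
    · intro s _; simpa using (hasDerivAt_id s).const_mul L
    · intro s hs
      calc |a * x s + b * x (ϑ * s)| ≤ |a * x s| + |b * x (ϑ * s)| := abs_add_le _ _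
        _ = |a| * |x s| + |b| * |x (ϑ * s)| := by rw [abs_mul, abs_mul]
        _ ≤ |a| * M + |b| * M :=
          add_le_add (mul_le_mul_of_nonneg_left (hM' s hs) (abs_nonneg a))
            (mul_le_mul_of_nonneg_left (hM' _ (hmem hs)) (abs_nonneg b))
        _ = L := by rw [hLdef]; ring
    · simp [hx0]
    · simp
  obtain ⟨H, hHdef⟩ : ∃ y : ℝ, y = |b| * ((|a| + |b|) * M) := ⟨_, rfl⟩
  have hH0 : 0 ≤ H := hHdef ▸ mul_nonneg (abs_nonneg b) (mul_nonneg (by positivity) hM0)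
  -- bound on inhomogeneity: |b * s * (a * x (ϑ s) + b * x (ϑ² s))| ≤ H * s for s ∈ [0,1]
  have hinh : ∀ s ∈ Icc (0:ℝ) 1, |b * s * (a * x (ϑ * s) + b * x (ϑ ^ 2 * s))| ≤ H * s := by
    intro s hs
    have h1 : |a * x (ϑ * s) + b * x (ϑ ^ 2 * s)| ≤ (|a| + |b|) * M := by
      calc |a * x (ϑ * s) + b * x (ϑ ^ 2 * s)| ≤ |a * x (ϑ * s)| + |b * x (ϑ ^ 2 * s)| :=
            abs_add_le _ _
        _ = |a| * |x (ϑ * s)| + |b| * |x (ϑ ^ 2 * s)| := by rw [abs_mul, abs_mul]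
        _ ≤ |a| * M + |b| * M :=
          add_le_add (mul_le_mul_of_nonneg_left (hM' _ (hmem hs)) (abs_nonneg a))
            (mul_le_mul_of_nonneg_left (hM' _ (hmem2 hs)) (abs_nonneg b))
        _ = (|a| + |b|) * M := by ring
    calc |b * s * (a * x (ϑ * s) + b * x (ϑ ^ 2 * s))|
        = |b| * s * |a * x (ϑ * s) + b * x (ϑ ^ 2 * s)| := by
          rw [abs_mul, abs_mul, abs_of_nonneg hs.1]
      _ ≤ |b| * s * ((|a| + |b|) * M) := by
          apply mul_le_mul_of_nonneg_left h1 (mul_nonneg (abs_nonneg b) hs.1)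
      _ = H * s := by rw [hHdef]; ring
  -- Step B1: |xdot t| ≤ K₁ * t on [0,1]
  obtain ⟨K₁, hK₁def⟩ : ∃ y : ℝ, y = (|a| + |b|) * M₂ + H := ⟨_, rfl⟩
  have hK₁0 : 0 ≤ K₁ := hK₁def ▸ add_nonneg (mul_nonneg (by positivity) hM₂0) hH0
  have hB1 : ∀ t ∈ Icc (0:ℝ) 1, |xdot t| ≤ K₁ * t := by
    apply abs_le_of_deriv_abs_le
      (f' := fun s => a * xdot s + b * xdot (ϑ * s) +
        b * s * (a * x (ϑ * s) + b * x (ϑ ^ 2 * s))) (g' := fun _ => K₁)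
    · exact fun s hs => hdode s hs.1
    · intro s _; simpa using (hasDerivAt_id s).const_mul K₁
    · intro s hs
      calc |a * xdot s + b * xdot (ϑ * s) + b * s * (a * x (ϑ * s) + b * x (ϑ ^ 2 * s))|
          ≤ |a * xdot s + b * xdot (ϑ * s)| + |b * s * (a * x (ϑ * s) + b * x (ϑ ^ 2 * s))| :=
            abs_add_le _ _
        _ ≤ (|a| * |xdot s| + |b| * |xdot (ϑ * s)|) + H * s := by
            apply add_le_add _ (hinh s hs)
            calc |a * xdot s + b * xdot (ϑ * s)| ≤ |a * xdot s| + |b * xdot (ϑ * s)| :=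
                  abs_add_le _ _
              _ = |a| * |xdot s| + |b| * |xdot (ϑ * s)| := by rw [abs_mul, abs_mul]
        _ ≤ (|a| * M₂ + |b| * M₂) + H * 1 := by
            apply add_le_add
            · exact add_le_add (mul_le_mul_of_nonneg_left (hM₂' s hs) (abs_nonneg a))
                (mul_le_mul_of_nonneg_left (hM₂' _ (hmem hs)) (abs_nonneg b))
            · exact mul_le_mul_of_nonneg_left hs.2 hH0
        _ = K₁ := by rw [hK₁def]; ring
    · exact hxdot0
    · simp
  -- Step B2: |xdot t| ≤ K₂/2 * t^2 on [0,1]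
  obtain ⟨K₂, hK₂def⟩ : ∃ y : ℝ, y = (|a| + |b|) * K₁ + H := ⟨_, rfl⟩
  have hK₂0 : 0 ≤ K₂ := hK₂def ▸ add_nonneg (mul_nonneg (by positivity) hK₁0) hH0
  have hϑs : ∀ s : ℝ, 0 ≤ s → ϑ * s ≤ s := fun s hs => mul_le_of_le_one_left hs hϑ1.le
  have hB2 : ∀ t ∈ Icc (0:ℝ) 1, |xdot t| ≤ K₂ / 2 * t ^ 2 := by
    apply abs_le_of_deriv_abs_le
      (f' := fun s => a * xdot s + b * xdot (ϑ * s) +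
        b * s * (a * x (ϑ * s) + b * x (ϑ ^ 2 * s))) (g' := fun s => K₂ * s)
    · exact fun s hs => hdode s hs.1
    · intro s _
      have h := (hasDerivAt_pow 2 s).const_mul (K₂ / 2)
      norm_num at h
      have e : K₂ / 2 * (2 * s) = K₂ * s := by ring
      exact e ▸ h
    · intro s hs
      have hd1 : |xdot s| ≤ K₁ * s := hB1 s hs
      have hd2 : |xdot (ϑ * s)| ≤ K₁ * s := by
        calc |xdot (ϑ * s)| ≤ K₁ * (ϑ * s) := hB1 _ (hmem hs)
          _ ≤ K₁ * s := mul_le_mul_of_nonneg_left (hϑs s hs.1) hK₁0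
      calc |a * xdot s + b * xdot (ϑ * s) + b * s * (a * x (ϑ * s) + b * x (ϑ ^ 2 * s))|
          ≤ |a * xdot s + b * xdot (ϑ * s)| + |b * s * (a * x (ϑ * s) + b * x (ϑ ^ 2 * s))| :=
            abs_add_le _ _
        _ ≤ (|a| * (K₁ * s) + |b| * (K₁ * s)) + H * s := by
            apply add_le_add _ (hinh s hs)
            calc |a * xdot s + b * xdot (ϑ * s)| ≤ |a * xdot s| + |b * xdot (ϑ * s)| :=
                  abs_add_le _ _
              _ = |a| * |xdot s| + |b| * |xdot (ϑ * s)| := by rw [abs_mul, abs_mul]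
              _ ≤ |a| * (K₁ * s) + |b| * (K₁ * s) :=
                  add_le_add (mul_le_mul_of_nonneg_left hd1 (abs_nonneg a))
                    (mul_le_mul_of_nonneg_left hd2 (abs_nonneg b))
        _ = K₂ * s := by rw [hK₂def, hHdef]; ring
    · exact hxdot0
    · simp
  -- Step C: error bound
  obtain ⟨c₀, hc₀def⟩ : ∃ y : ℝ, y = 1 / 2 * b * x₀ * (a + b) := ⟨_, rfl⟩
  obtain ⟨C₃, hC₃def⟩ : ∃ y : ℝ, y = (|a| + |b|) * (K₂ / 2) + |b| * ((|a| + |b|) * L) := ⟨_, rfl⟩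
  have hC₃0 : 0 ≤ C₃ := hC₃def ▸ add_nonneg (mul_nonneg (by positivity) (by linarith))
    (mul_nonneg (abs_nonneg b) (mul_nonneg (by positivity) hL0))
  have hC : ∀ t ∈ Icc (0:ℝ) 1, |xdot t - c₀ * t ^ 2| ≤ C₃ / 3 * t ^ 3 := by
    apply abs_le_of_deriv_abs_le
      (f' := fun s => a * xdot s + b * xdot (ϑ * s) +
        b * s * (a * x (ϑ * s) + b * x (ϑ ^ 2 * s)) - c₀ * (2 * s))
      (g' := fun s => C₃ * s ^ 2)
    · intro s hs
      have h2 : HasDerivAt (fun u : ℝ => c₀ * u ^ 2) (c₀ * (2 * s)) s := by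
        simpa using (hasDerivAt_pow 2 s).const_mul c₀
      exact (hdode s hs.1).sub h2
    · intro s _
      have h := (hasDerivAt_pow 3 s).const_mul (C₃ / 3)
      norm_num at h
      have e : C₃ / 3 * (3 * s ^ 2) = C₃ * s ^ 2 := by ring
      exact e ▸ h
    · intro s hs
      have hkey : a * xdot s + b * xdot (ϑ * s) +
          b * s * (a * x (ϑ * s) + b * x (ϑ ^ 2 * s)) - c₀ * (2 * s) =
          a * xdot s + b * xdot (ϑ * s) +
          b * s * (a * (x (ϑ * s) - x₀) + b * (x (ϑ ^ 2 * s) - x₀)) := by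
        rw [hc₀def]; ring
      rw [hkey]
      have hd1 : |xdot s| ≤ K₂ / 2 * s ^ 2 := hB2 s hs
      have hd2 : |xdot (ϑ * s)| ≤ K₂ / 2 * s ^ 2 := by
        calc |xdot (ϑ * s)| ≤ K₂ / 2 * (ϑ * s) ^ 2 := hB2 _ (hmem hs)
          _ ≤ K₂ / 2 * s ^ 2 := by
              apply mul_le_mul_of_nonneg_left _ (by linarith)
              have h := hϑs s hs.1
              have h0 : 0 ≤ ϑ * s := mul_nonneg hϑ0.le hs.1
              nlinarith
      have hx1 : |x (ϑ * s) - x₀| ≤ L * s := by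
        calc |x (ϑ * s) - x₀| ≤ L * (ϑ * s) := hA _ (hmem hs)
          _ ≤ L * s := mul_le_mul_of_nonneg_left (hϑs s hs.1) hL0
      have hx2 : |x (ϑ ^ 2 * s) - x₀| ≤ L * s := by
        have hle2 : ϑ ^ 2 * s ≤ s := by nlinarith [hϑs s hs.1, hs.1]
        calc |x (ϑ ^ 2 * s) - x₀| ≤ L * (ϑ ^ 2 * s) := hA _ (hmem2 hs)
          _ ≤ L * s := mul_le_mul_of_nonneg_left hle2 hL0
      have hin : |a * (x (ϑ * s) - x₀) + b * (x (ϑ ^ 2 * s) - x₀)| ≤ (|a| + |b|) * (L * s) := by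
        calc |a * (x (ϑ * s) - x₀) + b * (x (ϑ ^ 2 * s) - x₀)|
            ≤ |a * (x (ϑ * s) - x₀)| + |b * (x (ϑ ^ 2 * s) - x₀)| := abs_add_le _ _
          _ = |a| * |x (ϑ * s) - x₀| + |b| * |x (ϑ ^ 2 * s) - x₀| := by rw [abs_mul, abs_mul]
          _ ≤ |a| * (L * s) + |b| * (L * s) :=
              add_le_add (mul_le_mul_of_nonneg_left hx1 (abs_nonneg a))
                (mul_le_mul_of_nonneg_left hx2 (abs_nonneg b))
          _ = (|a| + |b|) * (L * s) := by ring
      calc |a * xdot s + b * xdot (ϑ * s) +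
            b * s * (a * (x (ϑ * s) - x₀) + b * (x (ϑ ^ 2 * s) - x₀))|
          ≤ |a * xdot s + b * xdot (ϑ * s)| +
            |b * s * (a * (x (ϑ * s) - x₀) + b * (x (ϑ ^ 2 * s) - x₀))| := abs_add_le _ _
        _ ≤ (|a| * (K₂ / 2 * s ^ 2) + |b| * (K₂ / 2 * s ^ 2)) +
            |b| * s * ((|a| + |b|) * (L * s)) := by
            apply add_le_add
            · calc |a * xdot s + b * xdot (ϑ * s)| ≤ |a * xdot s| + |b * xdot (ϑ * s)| :=
                    abs_add_le _ _
                _ = |a| * |xdot s| + |b| * |xdot (ϑ * s)| := by rw [abs_mul, abs_mul]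
                _ ≤ _ := add_le_add (mul_le_mul_of_nonneg_left hd1 (abs_nonneg a))
                    (mul_le_mul_of_nonneg_left hd2 (abs_nonneg b))
            · calc |b * s * (a * (x (ϑ * s) - x₀) + b * (x (ϑ ^ 2 * s) - x₀))|
                  = |b| * s * |a * (x (ϑ * s) - x₀) + b * (x (ϑ ^ 2 * s) - x₀)| := by
                    rw [abs_mul, abs_mul, abs_of_nonneg hs.1]
                _ ≤ |b| * s * ((|a| + |b|) * (L * s)) :=
                    mul_le_mul_of_nonneg_left hin (mul_nonneg (abs_nonneg b) hs.1)
        _ = C₃ * s ^ 2 := by rw [hC₃def]; ring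
    · simp [hxdot0]
    · simp
  have hrw : ∀ t : ℝ, (1 / 2) * b * t ^ 2 * x₀ * (a + b) = c₀ * t ^ 2 := by
    intro t; rw [hc₀def]; ring
  constructor
  · refine ⟨C₃ / 3 + 1, by linarith, 1, one_pos, fun t ht => ?_⟩
    rw [hrw]
    have := hC t ht
    have ht3 : 0 ≤ t ^ 3 := pow_nonneg ht.1 3
    nlinarith
  · intro hx₀ hb hab
    obtain ⟨m, hmdef⟩ : ∃ y : ℝ, y = |b| * |x₀| * |a + b| / 2 := ⟨_, rfl⟩
    have hm : 0 < m := by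
      rw [hmdef]
      exact div_pos (mul_pos (mul_pos (abs_pos.2 hb) (abs_pos.2 hx₀)) (abs_pos.2 hab)) two_pos
    have hc₀abs : |c₀| = m := by
      rw [hc₀def, hmdef, abs_mul, abs_mul, abs_mul]
      rw [abs_of_nonneg (by norm_num : (0:ℝ) ≤ 1/2)]
      ring
    obtain ⟨δ', hδdef⟩ : ∃ y : ℝ, y = min 1 (3 * m / (2 * (C₃ + 1))) := ⟨_, rfl⟩
    have h2 : (0:ℝ) < 2 * (C₃ + 1) := by linarith
    have hδpos : 0 < δ' := by
      rw [hδdef]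
      exact lt_min one_pos (div_pos (by linarith) h2)
    have hδ1 : δ' ≤ 1 := hδdef ▸ min_le_left _ _
    have hδ2 : C₃ / 3 * δ' ≤ m / 2 := by
      have h1 : δ' ≤ 3 * m / (2 * (C₃ + 1)) := hδdef ▸ min_le_right _ _
      rw [le_div_iff₀ h2] at h1
      nlinarith
    refine ⟨m / 2, by linarith, m + C₃ / 3, by linarith, δ', hδpos, fun t ht => ?_⟩
    have htIcc : t ∈ Icc (0:ℝ) 1 := ⟨ht.1.le, le_trans ht.2 hδ1⟩
    have hE := hC t htIcc
    have habs : |c₀ * t ^ 2| = m * t ^ 2 := by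
      rw [abs_mul, hc₀abs, abs_of_nonneg (by positivity : (0:ℝ) ≤ t ^ 2)]
    have hlow : m * t ^ 2 - C₃ / 3 * t ^ 3 ≤ |xdot t| := by
      have h1 : |c₀ * t ^ 2| - |xdot t - c₀ * t ^ 2| ≤ |xdot t| := by
        have := abs_sub_abs_le_abs_sub (c₀ * t ^ 2) (xdot t)
        have h2 : |c₀ * t ^ 2 - xdot t| = |xdot t - c₀ * t ^ 2| := abs_sub_comm _ _
        linarith [abs_sub_abs_le_abs_sub (c₀ * t ^ 2) (xdot t), h2.le, h2.ge]
      rw [habs] at h1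
      linarith
    have hhigh : |xdot t| ≤ m * t ^ 2 + C₃ / 3 * t ^ 3 := by
      have h1 : |xdot t| ≤ |xdot t - c₀ * t ^ 2| + |c₀ * t ^ 2| := by
        have := abs_add_le (xdot t - c₀ * t ^ 2) (c₀ * t ^ 2)
        simpa using this
      rw [habs] at h1
      linarith
    constructor
    · have ht2 : 0 ≤ t ^ 2 := by positivity
      have hct : C₃ / 3 * t ≤ m / 2 := by
        have := mul_le_mul_of_nonneg_left ht.2 (by linarith : (0:ℝ) ≤ C₃ / 3)
        linarith
      nlinarith
    · have ht2 : 0 ≤ t ^ 2 := by positivity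
      have hct : C₃ / 3 * t ≤ C₃ / 3 := by
        have := mul_le_mul_of_nonneg_left htIcc.2 (by linarith : (0:ℝ) ≤ C₃ / 3)
        linarith
      nlinarith
end

section
/- Let S : ℝ → ℝ have two continuous bounded derivatives (|S'| ≤ L, |S''| ≤ M), let X solve dX_t = S(X_{t−ϑ₀})dt + ε dW_t with X_s = x₀ (s ≤ 0), x the deterministic solution, and x^{(1)} the solution of dx_t^{(1)} = S'(x_{t−ϑ₀}) x_{t−ϑ₀}^{(1)} dt + dW_t, x_s^{(1)} = 0 (s ≤ 0). Then for every t ∈ [0,T], E| (X_t − x_t)/ε − x_t^{(1)} |² → 0 as ε → 0. -/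
/-!
Write `D = (X − x)/ε − x⁽¹⁾`. Subtracting the three integral equations, `D` solves a delay
equation whose integrand is `S'(x_{s−ϑ₀}) D_{s−ϑ₀}` plus `1/ε` times the second-order Taylor
remainder of `S` at `x_{s−ϑ₀}`. A Gronwall argument run over successive delay intervals of
length `ϑ₀` first gives `|X − x| ≤ ε K A`, where `A = sup_{[0,T]} |W|`, hence a Taylor remainder
of order `ε² A²`, and then `|D_t| ≤ ε C A²` pathwise. Thus `E D_t² ≤ ε² C² E A⁴`, and `E A⁴ < ∞`
by dyadic chaining: `A` is bounded by the sum over `n` of the largest increment of `W` on the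
`n`-th dyadic grid of `[0, T]`, whose fourth moment is at most `2ⁿ · E|N(0, T/2ⁿ)|⁴ = O(2⁻ⁿ)`.
-/
open MeasureTheory Set Filter

/-- A standard Wiener process on a probability space. -/
def IsWienerProcess {Ω : Type*} [MeasurableSpace Ω] (P : Measure Ω)
    (W : ℝ → Ω → ℝ) : Prop :=
  (∀ ω, W 0 ω = 0) ∧ (∀ ω, Continuous fun t => W t ω) ∧
  (∀ t, Measurable (W t)) ∧
  ∀ s t : ℝ, 0 ≤ s → s ≤ t →
    P.map (fun ω => W t ω - W s ω) =
      ProbabilityTheory.gaussianReal 0 (Real.toNNReal (t - s))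

open ProbabilityTheory
open scoped ENNReal NNReal

theorem abs_sub_le_of_abs_deriv_le {f : ℝ → ℝ} {C : ℝ} (hf : Differentiable ℝ f)
    (hC : ∀ y, |deriv f y| ≤ C) (a b : ℝ) : |f a - f b| ≤ C * |a - b| :=
  convex_univ.norm_image_sub_le_of_norm_deriv_le (fun y _ => hf y) (fun y _ => hC y)
    (mem_univ b) (mem_univ a)

theorem abs_sub_sub_deriv_mul_le {f : ℝ → ℝ} {M : ℝ} (hf : ContDiff ℝ 2 f)
    (hM : ∀ y, |deriv (deriv f) y| ≤ M) (a b : ℝ) :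
    |f a - f b - deriv f b * (a - b)| ≤ M * (a - b) ^ 2 := by
  have hg : ∀ y ∈ uIcc b a,
      HasDerivWithinAt (fun z => f z - deriv f b * z) (deriv f y - deriv f b) (uIcc b a) y :=
    fun y _ => (((hf.differentiable two_ne_zero) y).hasDerivAt.sub
      ((hasDerivAt_id y).const_mul (deriv f b) |>.congr_deriv (mul_one _))).hasDerivWithinAt
  have hbound : ∀ y ∈ uIcc b a, ‖deriv f y - deriv f b‖ ≤ M * |a - b| := fun y hy =>
    (abs_sub_le_of_abs_deriv_le hf.differentiable_deriv_two hM y b).trans <|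
      mul_le_mul_of_nonneg_left (abs_sub_left_of_mem_uIcc hy) ((abs_nonneg _).trans (hM 0))
  have := (convex_uIcc b a).norm_image_sub_le_of_norm_hasDerivWithin_le hg hbound
    left_mem_uIcc right_mem_uIcc
  rw [Real.norm_eq_abs, Real.norm_eq_abs] at this
  calc |f a - f b - deriv f b * (a - b)|
      = |f a - deriv f b * a - (f b - deriv f b * b)| := by congr 1; ring
    _ ≤ M * |a - b| * |a - b| := this
    _ = M * (a - b) ^ 2 := by rw [mul_assoc, abs_mul_abs_self, sq]

theorem continuousOn_Iic_of_delay_integral_eq {f g : ℝ → ℝ} {Φ : ℝ → ℝ → ℝ} {ϑ T : ℝ}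
    (hϑ : 0 < ϑ) (hT : 0 ≤ T) (hf₀ : ContinuousOn f (Iic 0)) (hg : ContinuousOn g (Icc 0 T))
    (hΦ : ContinuousOn (Function.uncurry Φ) (Iic T ×ˢ univ))
    (hf : ∀ t ∈ Icc 0 T, f t = g t + ∫ s in 0..t, Φ s (f (s - ϑ))) :
    ContinuousOn f (Iic T) := by
  suffices h : ∀ n : ℕ, ContinuousOn f (Iic (min T (n * ϑ))) by
    obtain ⟨n, hn⟩ := exists_nat_ge (T / ϑ)
    simpa [min_eq_left ((div_le_iff₀ hϑ).1 hn)] using h n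
  intro n
  induction n with
  | zero => exact hf₀.mono (Iic_subset_Iic.2 (by simp))
  | succ n ih =>
    set b := min T ((n + 1 : ℕ) * ϑ)
    have hb : 0 ≤ b := le_min hT (by positivity)
    have hbT : b ≤ T := min_le_left _ _
    have hdelay : ContinuousOn (fun s => Φ s (f (s - ϑ))) (Icc 0 b) := by
      refine hΦ.comp (continuousOn_id.prodMk (ih.comp (by fun_prop) fun s hs => ?_))
        fun s hs => ⟨hs.2.trans hbT, trivial⟩
      have : b ≤ (n + 1) * ϑ := by exact_mod_cast min_le_right T ((n + 1 : ℕ) * ϑ)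
      simp only [mem_Iic, le_min_iff]
      constructor <;> linarith [hs.2]
    have hprim : ContinuousOn (fun u => ∫ s in 0..u, Φ s (f (s - ϑ))) (Icc 0 b) := by
      have := intervalIntegral.continuousOn_primitive_interval (μ := volume) (a := 0) (b := b)
        (by rw [uIcc_of_le hb]; exact hdelay.integrableOn_Icc)
      rwa [uIcc_of_le hb] at this
    have hpos : ContinuousOn f (Icc 0 b) :=
      ((hg.mono (Icc_subset_Icc_right hbT)).add hprim).congr fun t ht =>
        hf t ⟨ht.1, ht.2.trans hbT⟩
    rw [← Iic_union_Icc_eq_Iic hb]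
    exact hf₀.union_of_isClosed hpos isClosed_Iic isClosed_Icc

/-- Each of the `⌈T / ϑ⌉` delay steps covering `[0, T]` multiplies a bound by `1 + L T`. -/
noncomputable def delayGronwallFactor (L T ϑ : ℝ) : ℝ := (1 + L * T) ^ ⌈T / ϑ⌉₊

theorem abs_le_of_delay_integral_eq {f φ r : ℝ → ℝ} {ϑ T L a c : ℝ} (hϑ : 0 < ϑ)
    (hT : 0 ≤ T) (hL : 0 ≤ L) (ha : 0 ≤ a) (hc : 0 ≤ c) (hf₀ : ∀ t ≤ 0, |f t| ≤ c)
    (hf : ∀ t ∈ Ioc 0 T, f t = (∫ s in 0..t, φ s) + r t) (hr : ∀ t ∈ Ioc 0 T, |r t| ≤ c)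
    (hφ : ∀ s ∈ Ioc 0 T, |φ s| ≤ L * |f (s - ϑ)| + a) {t : ℝ} (ht : t ≤ T) :
    |f t| ≤ (c + a * T) * delayGronwallFactor L T ϑ := by
  have hgrowth : 1 ≤ 1 + L * T := le_add_of_nonneg_right (mul_nonneg hL hT)
  suffices h : ∀ n : ℕ, ∀ t ≤ T, t ≤ n * ϑ → |f t| ≤ (c + a * T) * (1 + L * T) ^ n from
    h _ t ht (ht.trans ((div_le_iff₀ hϑ).1 (Nat.le_ceil _)))
  intro n
  induction n with
  | zero => exact fun t _ ht0 => by simpa using (hf₀ t (by simpa using ht0)).trans (by nlinarith)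
  | succ n ih =>
    intro t htT htn
    set B := (c + a * T) * (1 + L * T) ^ n
    have hcB : c + a * T ≤ B := le_mul_of_one_le_right (by positivity) (one_le_pow₀ hgrowth)
    rcases le_or_gt t 0 with ht0 | ht0
    · calc |f t| ≤ c := hf₀ t ht0
        _ ≤ B * (1 + L * T) := by nlinarith [mul_nonneg ha hT]
        _ = _ := by rw [pow_succ, mul_assoc]
    have hint : |∫ s in 0..t, φ s| ≤ (L * B + a) * t := by
      refine (intervalIntegral.norm_integral_le_of_norm_le_const (C := L * B + a) (f := φ)
        fun s hs => ?_).trans_eq (by rw [sub_zero, abs_of_pos ht0])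
      rw [uIoc_of_le ht0.le] at hs
      have hpast := ih (s - ϑ) (by linarith [hs.2]) (by push_cast at htn; linarith [hs.2])
      exact (hφ s ⟨hs.1, hs.2.trans htT⟩).trans (by gcongr)
    calc |f t| ≤ |∫ s in 0..t, φ s| + |r t| := hf t ⟨ht0, htT⟩ ▸ abs_add_le _ _
      _ ≤ (L * B + a) * T + c := by
          gcongr
          · exact hint.trans (by gcongr)
          · exact hr t ⟨ht0, htT⟩
      _ ≤ B * (1 + L * T) := by nlinarith [mul_nonneg hL hT]
      _ = _ := by rw [pow_succ, mul_assoc]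

theorem abs_div_sub_deriv_mul_le {f : ℝ → ℝ} {L M ε : ℝ} (hf : ContDiff ℝ 2 f)
    (hL : ∀ z, |deriv f z| ≤ L) (hM : ∀ z, |deriv (deriv f) z| ≤ M) (hε : 0 < ε) (p q y : ℝ) :
    |(f p - f q) / ε - deriv f q * y| ≤ L * |(p - q) / ε - y| + M * (p - q) ^ 2 / ε := by
  have hsplit : (f p - f q) / ε - deriv f q * y
      = deriv f q * ((p - q) / ε - y) + (f p - f q - deriv f q * (p - q)) / ε := by
    field_simp
    ring
  rw [hsplit]
  refine (abs_add_le _ _).trans (add_le_add ?_ ?_)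
  · rw [abs_mul]
    exact mul_le_mul_of_nonneg_right (hL q) (abs_nonneg _)
  · rw [abs_div, abs_of_pos hε]
    exact div_le_div_of_nonneg_right (abs_sub_sub_deriv_mul_le hf hM p q) hε.le

theorem intervalIntegrable_comp_sub_of_continuousOn {h : ℝ → ℝ} {ϑ T t : ℝ}
    (hh : ContinuousOn h (Iic T)) (hϑ : 0 ≤ ϑ) (ht₀ : 0 ≤ t) (ht : t ≤ T) :
    IntervalIntegrable (fun s => h (s - ϑ)) volume 0 t := by
  refine ContinuousOn.intervalIntegrable (hh.comp (by fun_prop) fun s hs => ?_)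
  rw [uIcc_of_le ht₀] at hs
  simp only [mem_Iic]
  linarith [hs.2]

section Pathwise

variable {S : ℝ → ℝ} {L M ϑ T x₀ ε A : ℝ} {w ξ x y : ℝ → ℝ}

theorem continuousOn_Iic_of_delay_eq (hϑ : 0 < ϑ) (hT : 0 ≤ T) (hS : Continuous S)
    (hw : Continuous w) (hξ₀ : ∀ t ≤ 0, ξ t = x₀)
    (hξ : ∀ t ∈ Icc 0 T, ξ t = x₀ + (∫ s in 0..t, S (ξ (s - ϑ))) + w t) :
    ContinuousOn ξ (Iic T) :=
  continuousOn_Iic_of_delay_integral_eq (g := fun t => x₀ + w t) (Φ := fun _ z => S z) hϑ hT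
    (continuousOn_const.congr hξ₀) (by fun_prop) (hS.comp continuous_snd).continuousOn
    fun t ht => by rw [hξ t ht]; ring

theorem continuousOn_Iic_of_linearized_delay_eq (hϑ : 0 < ϑ) (hT : 0 ≤ T)
    (hS' : Continuous (deriv S)) (hxc : ContinuousOn x (Iic T)) (hw : Continuous w)
    (hy₀ : ∀ t ≤ 0, y t = 0)
    (hy : ∀ t ∈ Icc 0 T, y t = (∫ s in 0..t, deriv S (x (s - ϑ)) * y (s - ϑ)) + w t) :
    ContinuousOn y (Iic T) := by
  refine continuousOn_Iic_of_delay_integral_eq (Φ := fun s z => deriv S (x (s - ϑ)) * z) hϑ hT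
    (continuousOn_const.congr hy₀) hw.continuousOn ?_ fun t ht => by rw [hy t ht]; ring
  refine (hS'.comp_continuousOn (hxc.comp (by fun_prop) fun p hp => ?_)).mul
    continuous_snd.continuousOn
  simp only [mem_Iic]
  linarith [(mem_prod.1 hp).1.out]

theorem abs_sub_le_of_delay_eq (hϑ : 0 < ϑ) (hT : 0 ≤ T) (hS : Differentiable ℝ S)
    (hL : ∀ z, |deriv S z| ≤ L) (hε : 0 ≤ ε) (hwc : Continuous w)
    (hw : ∀ u ∈ Icc 0 T, |w u| ≤ A) (hξ₀ : ∀ t ≤ 0, ξ t = x₀)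
    (hξ : ∀ t ∈ Icc 0 T, ξ t = x₀ + (∫ s in 0..t, S (ξ (s - ϑ))) + ε * w t)
    (hx₀ : ∀ t ≤ 0, x t = x₀) (hx : ∀ t ∈ Icc 0 T, x t = x₀ + ∫ s in 0..t, S (x (s - ϑ)))
    {t : ℝ} (ht : t ≤ T) :
    |ξ t - x t| ≤ ε * A * delayGronwallFactor L T ϑ := by
  have hSc := hS.continuous
  have hξc := continuousOn_Iic_of_delay_eq hϑ hT hSc (by fun_prop) hξ₀ hξ
  have hxc := continuousOn_Iic_of_delay_eq (w := 0) hϑ hT hSc continuous_const hx₀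
    fun t ht => by simp [hx t ht]
  have hA : 0 ≤ A := (abs_nonneg _).trans (hw 0 ⟨le_rfl, hT⟩)
  have hbound := abs_le_of_delay_integral_eq (f := fun t => ξ t - x t)
    (φ := fun s => S (ξ (s - ϑ)) - S (x (s - ϑ))) (r := fun t => ε * w t) (a := 0)
    (c := ε * A) hϑ hT ((abs_nonneg _).trans (hL 0)) le_rfl (by positivity) (fun t ht => ?_)
    (fun t ht => ?_) (fun t ht => ?_) (fun s _ => ?_) ht
  · simpa using hbound
  · simp only [hξ₀ t ht, hx₀ t ht, sub_self, abs_zero]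
    positivity
  · rw [hξ t (Ioc_subset_Icc_self ht), hx t (Ioc_subset_Icc_self ht),
      intervalIntegral.integral_sub
        (intervalIntegrable_comp_sub_of_continuousOn (h := fun s => S (ξ s))
          (hSc.comp_continuousOn hξc) hϑ.le ht.1.le ht.2)
        (intervalIntegrable_comp_sub_of_continuousOn (h := fun s => S (x s))
          (hSc.comp_continuousOn hxc) hϑ.le ht.1.le ht.2)]
    ring
  · rw [abs_mul, abs_of_nonneg hε]
    exact mul_le_mul_of_nonneg_left (hw t (Ioc_subset_Icc_self ht)) hε
  · simpa using abs_sub_le_of_abs_deriv_le hS hL _ _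

theorem abs_div_sub_le_of_delay_eq (hϑ : 0 < ϑ) (hT : 0 ≤ T) (hS : ContDiff ℝ 2 S)
    (hL : ∀ z, |deriv S z| ≤ L) (hM : ∀ z, |deriv (deriv S) z| ≤ M) (hε : 0 < ε)
    (hwc : Continuous w) (hw : ∀ u ∈ Icc 0 T, |w u| ≤ A) (hξ₀ : ∀ t ≤ 0, ξ t = x₀)
    (hξ : ∀ t ∈ Icc 0 T, ξ t = x₀ + (∫ s in 0..t, S (ξ (s - ϑ))) + ε * w t)
    (hx₀ : ∀ t ≤ 0, x t = x₀) (hx : ∀ t ∈ Icc 0 T, x t = x₀ + ∫ s in 0..t, S (x (s - ϑ)))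
    (hy₀ : ∀ t ≤ 0, y t = 0)
    (hy : ∀ t ∈ Icc 0 T, y t = (∫ s in 0..t, deriv S (x (s - ϑ)) * y (s - ϑ)) + w t)
    {t : ℝ} (ht : t ≤ T) :
    |(ξ t - x t) / ε - y t| ≤ ε * (M * T * delayGronwallFactor L T ϑ ^ 3) * A ^ 2 := by
  set K := delayGronwallFactor L T ϑ
  have hM0 : 0 ≤ M := (abs_nonneg _).trans (hM 0)
  have hSc := hS.continuous
  have hS'c := hS.continuous_deriv one_le_two
  have hξc := continuousOn_Iic_of_delay_eq hϑ hT hSc (by fun_prop) hξ₀ hξ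
  have hxc := continuousOn_Iic_of_delay_eq (w := 0) hϑ hT hSc continuous_const hx₀
    fun t ht => by simp [hx t ht]
  have hyc := continuousOn_Iic_of_linearized_delay_eq hϑ hT hS'c hxc hwc hy₀ hy
  have hint : ∀ t ∈ Ioc 0 T, ∀ h : ℝ → ℝ, ContinuousOn h (Iic T) →
      IntervalIntegrable (fun s => h (s - ϑ)) volume 0 t := fun t ht h hh =>
    intervalIntegrable_comp_sub_of_continuousOn hh hϑ.le ht.1.le ht.2
  have hbound := abs_le_of_delay_integral_eq (f := fun t => (ξ t - x t) / ε - y t)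
    (φ := fun s => (S (ξ (s - ϑ)) - S (x (s - ϑ))) / ε - deriv S (x (s - ϑ)) * y (s - ϑ))
    (r := 0) (a := ε * (M * A ^ 2 * K ^ 2)) (c := 0)
    hϑ hT ((abs_nonneg _).trans (hL 0)) (by positivity) le_rfl (fun t ht => ?_) (fun t ht => ?_)
    (fun _ _ => by simp) (fun s hs => ?_) ht
  · calc |(ξ t - x t) / ε - y t| ≤ (0 + ε * (M * A ^ 2 * K ^ 2) * T) * K := hbound
      _ = ε * (M * T * K ^ 3) * A ^ 2 := by ring
  · simp [hξ₀ t ht, hx₀ t ht, hy₀ t ht]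
  · have hIt := hint t ht
    have hSξ := hIt (fun s => S (ξ s)) (hSc.comp_continuousOn hξc)
    have hSx := hIt (fun s => S (x s)) (hSc.comp_continuousOn hxc)
    rw [intervalIntegral.integral_sub
        ((hSξ.sub hSx).div_const ε) (hIt (fun s => deriv S (x s) * y s)
          (hS'c.comp_continuousOn hxc |>.mul hyc)),
      intervalIntegral.integral_div, intervalIntegral.integral_sub hSξ hSx,
      hξ t (Ioc_subset_Icc_self ht), hx t (Ioc_subset_Icc_self ht),
      hy t (Ioc_subset_Icc_self ht)]
    simp only [Pi.zero_apply, add_zero]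
    field_simp
    ring
  · have hpert := abs_sub_le_of_delay_eq hϑ hT (hS.differentiable two_ne_zero) hL hε.le hwc hw
      hξ₀ hξ hx₀ hx (t := s - ϑ) (by linarith [hs.2])
    refine (abs_div_sub_deriv_mul_le hS hL hM hε _ _ _).trans (add_le_add le_rfl ?_)
    rw [div_le_iff₀ hε]
    calc M * (ξ (s - ϑ) - x (s - ϑ)) ^ 2 ≤ M * (ε * A * K) ^ 2 := by
          rw [← sq_abs]; gcongr
      _ = ε * (M * A ^ 2 * K ^ 2) * ε := by ring

end Pathwise

theorem ENNReal.tsum_mul_pow_le (w b : ℕ → ℝ≥0∞) (k : ℕ) :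
    (∑' n, w n * b n) ^ k ≤ (∑' n, w n) ^ k * ∑' n, b n ^ k := by
  calc (∑' n, w n * b n) ^ k ≤ ((∑' n, w n) * ⨆ n, b n) ^ k := by
        gcongr
        rw [← ENNReal.tsum_mul_right]
        exact ENNReal.tsum_le_tsum fun n => by gcongr; exact le_iSup b n
    _ = (∑' n, w n) ^ k * ⨆ n, b n ^ k := by rw [mul_pow, ENNReal.iSup_pow]
    _ ≤ (∑' n, w n) ^ k * ∑' n, b n ^ k := by gcongr; exact iSup_le ENNReal.le_tsum

theorem lintegral_tsum_pow_lt_top {Ω : Type*} [MeasurableSpace Ω] {μ : Measure Ω}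
    {a : ℕ → Ω → ℝ≥0∞} (ha : ∀ n, AEMeasurable (a n) μ) {k : ℕ} {C : ℝ≥0∞} {ρ r : ℝ}
    (hC : C ≠ ⊤) (hρ₀ : 0 < ρ) (hρ₁ : ρ < 1) (hr₀ : 0 ≤ r) (hr : r < ρ ^ k)
    (h : ∀ n, ∫⁻ ω, a n ω ^ k ∂μ ≤ C * ENNReal.ofReal (r ^ n)) :
    ∫⁻ ω, (∑' n, a n ω) ^ k ∂μ < ⊤ := by
  set q := r / ρ ^ k
  have hq : q < 1 := (div_lt_one (by positivity)).2 hr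
  -- Split `aₙ = ρⁿ · (ρ⁻ⁿ aₙ)`: the weights `ρⁿ` are summable, and the reweighted terms have
  -- `k`-th moments `≤ C (r / ρᵏ)ⁿ`, again summable.
  have hsplit : ∀ n ω, a n ω = ENNReal.ofReal (ρ ^ n) * (ENNReal.ofReal (ρ⁻¹ ^ n) * a n ω) :=
    fun n ω => by
      rw [← mul_assoc, ← ENNReal.ofReal_mul (by positivity), ← mul_pow,
        mul_inv_cancel₀ hρ₀.ne', one_pow, ENNReal.ofReal_one, one_mul]
  have hweights : ∑' n, ENNReal.ofReal (ρ ^ n) ≠ ⊤ := by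
    rw [← ENNReal.ofReal_tsum_of_nonneg (fun n => by positivity)
      (summable_geometric_of_lt_one hρ₀.le hρ₁)]
    exact ENNReal.ofReal_ne_top
  have hterm : ∀ n, ∫⁻ ω, (ENNReal.ofReal (ρ⁻¹ ^ n) * a n ω) ^ k ∂μ
      ≤ C * ENNReal.ofReal (q ^ n) := fun n => by
    simp_rw [mul_pow]
    rw [lintegral_const_mul'' _ ((ha n).pow_const k)]
    calc ENNReal.ofReal (ρ⁻¹ ^ n) ^ k * ∫⁻ ω, a n ω ^ k ∂μ
        ≤ ENNReal.ofReal (ρ⁻¹ ^ n) ^ k * (C * ENNReal.ofReal (r ^ n)) := by gcongr; exact h n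
      _ = C * ENNReal.ofReal (q ^ n) := by
        rw [← ENNReal.ofReal_pow (by positivity), mul_left_comm,
          ← ENNReal.ofReal_mul (by positivity)]
        congr 2
        rw [div_pow, ← pow_mul, ← pow_mul, inv_pow, mul_comm n k, pow_mul]
        field_simp
  calc ∫⁻ ω, (∑' n, a n ω) ^ k ∂μ
      ≤ ∫⁻ ω, (∑' n, ENNReal.ofReal (ρ ^ n)) ^ k *
          ∑' n, (ENNReal.ofReal (ρ⁻¹ ^ n) * a n ω) ^ k ∂μ := by
        refine lintegral_mono fun ω => ?_
        rw [tsum_congr fun n => hsplit n ω]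
        exact ENNReal.tsum_mul_pow_le _ _ k
    _ = (∑' n, ENNReal.ofReal (ρ ^ n)) ^ k *
          ∑' n, ∫⁻ ω, (ENNReal.ofReal (ρ⁻¹ ^ n) * a n ω) ^ k ∂μ := by
        have hm : ∀ n, AEMeasurable (fun ω => (ENNReal.ofReal (ρ⁻¹ ^ n) * a n ω) ^ k) μ :=
          fun n => ((ha n).const_mul _).pow_const k
        rw [lintegral_const_mul'' _ (AEMeasurable.tsum hm), lintegral_tsum hm]
    _ ≤ (∑' n, ENNReal.ofReal (ρ ^ n)) ^ k * ∑' n, C * ENNReal.ofReal (q ^ n) := by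
        gcongr with n; exact hterm n
    _ < ⊤ := by
        rw [ENNReal.tsum_mul_left, ← ENNReal.ofReal_tsum_of_nonneg (fun n => by positivity)
          (summable_geometric_of_lt_one (by positivity) hq)]
        exact ENNReal.mul_lt_top (ENNReal.pow_lt_top hweights.lt_top)
          (ENNReal.mul_lt_top hC.lt_top ENNReal.ofReal_lt_top)

theorem lintegral_enorm_pow_gaussianReal_lt_top (μ : ℝ) (v : ℝ≥0) (k : ℕ) :
    ∫⁻ y, ‖y‖ₑ ^ k ∂gaussianReal μ v < ⊤ := by
  rcases k.eq_zero_or_pos with rfl | hk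
  · simp
  have h := (memLp_id_gaussianReal (μ := μ) (v := v) k).eLpNorm_lt_top
  rw [eLpNorm_lt_top_iff_lintegral_rpow_enorm_lt_top (by exact_mod_cast hk.ne') (by simp)] at h
  simpa using h

theorem lintegral_enorm_pow_gaussianReal (v : ℝ≥0) (k : ℕ) :
    ∫⁻ y, ‖y‖ₑ ^ k ∂gaussianReal 0 v
      = (NNReal.sqrt v : ℝ≥0∞) ^ k * ∫⁻ y, ‖y‖ₑ ^ k ∂gaussianReal 0 1 := by
  have hmap : (gaussianReal 0 1).map (fun y => (NNReal.sqrt v : ℝ) * y) = gaussianReal 0 v := by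
    rw [gaussianReal_map_const_mul, mul_zero, mul_one]
    congr
    simp
  rw [← hmap, lintegral_map (by fun_prop) (by fun_prop), ← lintegral_const_mul' _ _ (by simp)]
  congr 1
  ext y
  rw [enorm_mul, mul_pow, Real.enorm_of_nonneg (NNReal.coe_nonneg _), ENNReal.ofReal_coe_nnreal]

noncomputable def dyadicOsc (w : ℝ → ℝ) (T : ℝ) (n : ℕ) : ℝ≥0∞ :=
  (Finset.range (2 ^ n)).sup fun k => ‖w ((k + 1) * T / 2 ^ n) - w (k * T / 2 ^ n)‖ₑ

theorem enorm_le_sum_dyadicOsc {w : ℝ → ℝ} {T : ℝ} (hw₀ : w 0 = 0) (m : ℕ) {j : ℕ}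
    (hj : j ≤ 2 ^ m) : ‖w (j * T / 2 ^ m)‖ₑ ≤ ∑ n ∈ Finset.range (m + 1), dyadicOsc w T n := by
  induction m generalizing j with
  | zero =>
    interval_cases j
    · simp [hw₀]
    · simp [dyadicOsc, hw₀]
  | succ m ih =>
    obtain ⟨i, hji⟩ := Nat.even_or_odd' j
    have hi : i ≤ 2 ^ m := by rw [pow_succ] at hj; omega
    have hmid : 2 * (i : ℝ) * T / 2 ^ (m + 1) = i * T / 2 ^ m := by
      field_simp
      ring
    have hstep : ‖w (j * T / 2 ^ (m + 1)) - w (i * T / 2 ^ m)‖ₑ ≤ dyadicOsc w T (m + 1) := by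
      rcases hji with rfl | rfl
      · simp [hmid]
      · have hk : 2 * i < 2 ^ (m + 1) := by omega
        have hle := Finset.le_sup
          (f := fun k : ℕ => ‖w ((k + 1) * T / 2 ^ (m + 1)) - w (k * T / 2 ^ (m + 1))‖ₑ)
          (Finset.mem_range.2 hk)
        push_cast at hle ⊢
        rwa [hmid] at hle
    calc ‖w (j * T / 2 ^ (m + 1))‖ₑ
        = ‖w (i * T / 2 ^ m) + (w (j * T / 2 ^ (m + 1)) - w (i * T / 2 ^ m))‖ₑ := by
          rw [add_sub_cancel]
      _ ≤ ‖w (i * T / 2 ^ m)‖ₑ + ‖w (j * T / 2 ^ (m + 1)) - w (i * T / 2 ^ m)‖ₑ :=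
          enorm_add_le _ _
      _ ≤ ∑ n ∈ Finset.range (m + 1), dyadicOsc w T n + dyadicOsc w T (m + 1) :=
          add_le_add (ih hi) hstep
      _ = ∑ n ∈ Finset.range (m + 2), dyadicOsc w T n := (Finset.sum_range_succ _ _).symm

theorem enorm_le_tsum_dyadicOsc {w : ℝ → ℝ} {T u : ℝ} (hw₀ : w 0 = 0) (hw : Continuous w)
    (hT : 0 < T) (hu : u ∈ Icc 0 T) : ‖w u‖ₑ ≤ ∑' n, dyadicOsc w T n := by
  have hu' : 0 ≤ u / T := div_nonneg hu.1 hT.le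
  have hj : ∀ m : ℕ, ⌊u / T * 2 ^ m⌋₊ ≤ 2 ^ m := fun m => by
    have : u / T * 2 ^ m ≤ (2 ^ m : ℕ) := by
      push_cast
      exact mul_le_of_le_one_left (by positivity) ((div_le_one hT).2 hu.2)
    exact_mod_cast (Nat.floor_le_floor this).trans (Nat.floor_natCast _).le
  have hlim : Tendsto (fun m : ℕ => (⌊u / T * 2 ^ m⌋₊ : ℝ) * T / 2 ^ m) atTop (nhds u) := by
    have := ((tendsto_nat_floor_mul_div_atTop hu').comp
      (tendsto_pow_atTop_atTop_of_one_lt one_lt_two)).mul_const T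
    rw [div_mul_cancel₀ _ hT.ne'] at this
    refine this.congr fun m => ?_
    simp only [Function.comp_apply]
    ring
  refine le_of_tendsto ((hw.tendsto u).comp hlim).enorm (Eventually.of_forall fun m => ?_)
  exact (enorm_le_sum_dyadicOsc hw₀ m (hj m)).trans (ENNReal.sum_le_tsum _)

theorem measurable_dyadicOsc {Ω : Type*} [MeasurableSpace Ω] {W : ℝ → Ω → ℝ}
    (hW : ∀ t, Measurable (W t)) (T : ℝ) (n : ℕ) :
    Measurable fun ω => dyadicOsc (W · ω) T n := by
  have : (fun ω => dyadicOsc (W · ω) T n) = (Finset.range (2 ^ n)).sup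
      fun k ω => ‖W ((k + 1) * T / 2 ^ n) ω - W (k * T / 2 ^ n) ω‖ₑ := by
    ext ω
    simp [dyadicOsc, Finset.sup_apply]
  rw [this]
  exact Finset.sup_induction measurable_const (fun _ h₁ _ h₂ => h₁.sup h₂)
    fun k _ => ((hW _).sub (hW _)).enorm

namespace IsWienerProcess

variable {Ω : Type*} [MeasurableSpace Ω] {P : Measure Ω} {W : ℝ → Ω → ℝ}

theorem lintegral_enorm_sub_pow_four (hW : IsWienerProcess P W) {s t : ℝ} (hs : 0 ≤ s)
    (hst : s ≤ t) :
    ∫⁻ ω, ‖W t ω - W s ω‖ₑ ^ 4 ∂P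
      = ENNReal.ofReal (t - s) ^ 2 * ∫⁻ y, ‖y‖ₑ ^ 4 ∂gaussianReal 0 1 := by
  rw [← lintegral_map (f := fun y : ℝ => ‖y‖ₑ ^ 4) (g := fun ω => W t ω - W s ω) (by fun_prop)
      ((hW.2.2.1 t).sub (hW.2.2.1 s)), hW.2.2.2 s t hs hst, lintegral_enorm_pow_gaussianReal,
    pow_mul' _ 2 2, ← ENNReal.coe_pow, NNReal.sq_sqrt]
  rfl

theorem lintegral_dyadicOsc_pow_four_le (hW : IsWienerProcess P W) {T : ℝ} (hT : 0 ≤ T)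
    (n : ℕ) :
    ∫⁻ ω, dyadicOsc (W · ω) T n ^ 4 ∂P
      ≤ (ENNReal.ofReal (T ^ 2) * ∫⁻ y, ‖y‖ₑ ^ 4 ∂gaussianReal 0 1)
        * ENNReal.ofReal (2⁻¹ ^ n) := by
  set Δ : ℕ → Ω → ℝ≥0∞ := fun k ω => ‖W ((k + 1) * T / 2 ^ n) ω - W (k * T / 2 ^ n) ω‖ₑ
  have hpow : ∀ ω, dyadicOsc (W · ω) T n ^ 4 ≤ ∑ k ∈ Finset.range (2 ^ n), Δ k ω ^ 4 := by
    intro ω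
    obtain ⟨k, hk, hmax⟩ := Finset.exists_mem_eq_sup _ (Finset.nonempty_range_iff.2
      (pow_ne_zero n two_ne_zero)) fun k => Δ k ω
    rw [dyadicOsc, hmax]
    exact Finset.single_le_sum (f := fun k => Δ k ω ^ 4) (fun _ _ => by simp) hk
  have hΔ : ∀ k : ℕ, ∫⁻ ω, Δ k ω ^ 4 ∂P
      = ENNReal.ofReal (T / 2 ^ n) ^ 2 * ∫⁻ y, ‖y‖ₑ ^ 4 ∂gaussianReal 0 1 := by
    intro k
    rw [lintegral_enorm_sub_pow_four hW (by positivity) (by gcongr; linarith)]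
    congr 3
    ring
  calc ∫⁻ ω, dyadicOsc (W · ω) T n ^ 4 ∂P
      ≤ ∑ k ∈ Finset.range (2 ^ n), ∫⁻ ω, Δ k ω ^ 4 ∂P :=
        (lintegral_mono hpow).trans_eq (lintegral_finsetSum (f := fun k ω => Δ k ω ^ 4) _
          fun k _ => ((hW.2.2.1 _).sub (hW.2.2.1 _)).enorm.pow_const 4)
    _ = 2 ^ n * ENNReal.ofReal (T / 2 ^ n) ^ 2 *
          ∫⁻ y, ‖y‖ₑ ^ 4 ∂gaussianReal 0 1 := by
        simp [hΔ, mul_assoc]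
    _ = _ := by
        have hscale : (2 : ℝ≥0∞) ^ n * ENNReal.ofReal (T / 2 ^ n) ^ 2
            = ENNReal.ofReal (T ^ 2) * ENNReal.ofReal (2⁻¹ ^ n) := by
          rw [← ENNReal.ofReal_pow (by positivity), ← ENNReal.ofReal_mul (by positivity),
            show (2 : ℝ≥0∞) ^ n = ENNReal.ofReal (2 ^ n) by simp,
            ← ENNReal.ofReal_mul (by positivity)]
          congr 1
          rw [inv_pow]
          field_simp
        rw [hscale]
        ring

theorem exists_enorm_le_lintegral_pow_four_lt_top (hW : IsWienerProcess P W) {T : ℝ}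
    (hT : 0 < T) :
    ∃ G : Ω → ℝ≥0∞, Measurable G ∧ ∫⁻ ω, G ω ^ 4 ∂P < ⊤ ∧
      ∀ ω, ∀ u ∈ Icc 0 T, ‖W u ω‖ₑ ≤ G ω := by
  refine ⟨fun ω => ∑' n, dyadicOsc (W · ω) T n,
    Measurable.tsum (measurable_dyadicOsc hW.2.2.1 T),
    lintegral_tsum_pow_lt_top (fun n => (measurable_dyadicOsc hW.2.2.1 T n).aemeasurable)
      (ρ := 8 / 9) (r := 2⁻¹) ?_ (by norm_num) (by norm_num) (by norm_num) (by norm_num)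
      (lintegral_dyadicOsc_pow_four_le hW hT.le),
    fun ω u hu => enorm_le_tsum_dyadicOsc (hW.1 ω) (hW.2.1 ω) hT hu⟩
  exact ENNReal.mul_ne_top ENNReal.ofReal_ne_top
    (lintegral_enorm_pow_gaussianReal_lt_top 0 1 4).ne

end IsWienerProcess

theorem integral_sq_le_of_abs_le_mul_sq {Ω : Type*} [MeasurableSpace Ω] {P : Measure Ω}
    {Z : Ω → ℝ} {G : Ω → ℝ≥0∞} (hG : Measurable G) (hG4 : ∫⁻ ω, G ω ^ 4 ∂P < ⊤) {c : ℝ}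
    (hZ : ∀ ω, G ω ≠ ⊤ → |Z ω| ≤ c * (G ω).toReal ^ 2) :
    ∫ ω, Z ω ^ 2 ∂P ≤ c ^ 2 * (∫⁻ ω, G ω ^ 4 ∂P).toReal := by
  have hfin : ∀ᵐ ω ∂P, G ω ^ 4 < ⊤ := ae_lt_top (hG.pow_const 4) hG4.ne
  calc ∫ ω, Z ω ^ 2 ∂P ≤ ∫ ω, c ^ 2 * (G ω ^ 4).toReal ∂P := by
        refine integral_mono_of_nonneg (Eventually.of_forall fun ω => sq_nonneg _)
          ((integrable_toReal_of_lintegral_ne_top (hG.pow_const 4).aemeasurable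
            hG4.ne).const_mul _) ?_
        filter_upwards [hfin] with ω hω
        have hZω := hZ ω fun h => by simp [h] at hω
        calc Z ω ^ 2 = |Z ω| ^ 2 := (sq_abs _).symm
          _ ≤ (c * (G ω).toReal ^ 2) ^ 2 := pow_le_pow_left₀ (abs_nonneg _) hZω 2
          _ = c ^ 2 * (G ω ^ 4).toReal := by rw [ENNReal.toReal_pow]; ring
    _ = c ^ 2 * (∫⁻ ω, G ω ^ 4 ∂P).toReal := by
        rw [integral_const_mul, integral_toReal (hG.pow_const 4).aemeasurable hfin]

theorem first_order_L2_expansion_general {Ω : Type*} [MeasurableSpace Ω]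
    (P : Measure Ω)
    (S : ℝ → ℝ) (hS : ContDiff ℝ 2 S) (L M : ℝ)
    (hL : ∀ y, |deriv S y| ≤ L) (hM : ∀ y, |deriv (deriv S) y| ≤ M)
    (T ϑ₀ x₀ : ℝ) (hT : 0 < T) (hϑ : 0 < ϑ₀)
    (W : ℝ → Ω → ℝ) (hW : IsWienerProcess P W)
    (X : ℝ → ℝ → Ω → ℝ)
    (hXinit : ∀ ε : ℝ, 0 < ε → ∀ ω, ∀ s : ℝ, s ≤ 0 → X ε s ω = x₀)
    (hXeq : ∀ ε : ℝ, 0 < ε → ∀ ω, ∀ t ∈ Icc (0 : ℝ) T,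
      X ε t ω = x₀ + (∫ s in (0 : ℝ)..t, S (X ε (s - ϑ₀) ω)) + ε * W t ω)
    (x : ℝ → ℝ)
    (hxinit : ∀ s : ℝ, s ≤ 0 → x s = x₀)
    (hxeq : ∀ t ∈ Icc (0 : ℝ) T, x t = x₀ + ∫ s in (0 : ℝ)..t, S (x (s - ϑ₀)))
    (x1 : ℝ → Ω → ℝ)
    (hx1init : ∀ ω, ∀ s : ℝ, s ≤ 0 → x1 s ω = 0)
    (hx1eq : ∀ ω, ∀ t ∈ Icc (0 : ℝ) T,
      x1 t ω = (∫ s in (0 : ℝ)..t, deriv S (x (s - ϑ₀)) * x1 (s - ϑ₀) ω) + W t ω) :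
    ∀ t ∈ Icc (0 : ℝ) T,
      Tendsto (fun ε : ℝ => ∫ ω, ((X ε t ω - x t) / ε - x1 t ω) ^ 2 ∂P)
        (nhdsWithin 0 (Ioi 0)) (nhds 0) := by
  intro t ht
  obtain ⟨G, hGm, hG4, hWG⟩ := hW.exists_enorm_le_lintegral_pow_four_lt_top hT
  have hWA : ∀ ω, G ω ≠ ⊤ → ∀ u ∈ Icc 0 T, |W u ω| ≤ (G ω).toReal := fun ω hω u hu => by
    simpa using ENNReal.toReal_mono hω (hWG ω u hu)
  set C := M * T * delayGronwallFactor L T ϑ₀ ^ 3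
  have hbound : ∀ ε ∈ Ioi (0 : ℝ), ∫ ω, ((X ε t ω - x t) / ε - x1 t ω) ^ 2 ∂P
      ≤ (ε * C) ^ 2 * (∫⁻ ω, G ω ^ 4 ∂P).toReal := fun ε hε =>
    integral_sq_le_of_abs_le_mul_sq hGm hG4 fun ω hω =>
      abs_div_sub_le_of_delay_eq hϑ hT.le hS hL hM hε (hW.2.1 ω) (hWA ω hω) (hXinit ε hε ω)
        (hXeq ε hε ω) hxinit hxeq (hx1init ω) (hx1eq ω) ht.2
  have hlim : Tendsto (fun ε : ℝ => (ε * C) ^ 2 * (∫⁻ ω, G ω ^ 4 ∂P).toReal) (nhds 0) (nhds 0) :=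
    (((continuous_id.mul continuous_const).pow 2).mul continuous_const).tendsto' _ _ (by simp)
  exact squeeze_zero' (Eventually.of_forall fun ε => integral_nonneg fun ω => sq_nonneg _)
    (eventually_nhdsWithin_of_forall hbound) (hlim.mono_left nhdsWithin_le_nhds)

/-- First-order `L²` expansion in `ε` of the small-noise delay diffusion:
`E|(X_t − x_t)/ε − x_t⁽¹⁾|² → 0` as `ε → 0`. -/
theorem first_order_L2_expansion {Ω : Type*} [MeasurableSpace Ω]
    (P : Measure Ω) [IsProbabilityMeasure P]
    (S : ℝ → ℝ) (hS : ContDiff ℝ 2 S) (L M : ℝ)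
    (hL : ∀ y, |deriv S y| ≤ L) (hM : ∀ y, |deriv (deriv S) y| ≤ M)
    (T ϑ₀ x₀ : ℝ) (hT : 0 < T) (hϑ : 0 < ϑ₀)
    (W : ℝ → Ω → ℝ) (hW : IsWienerProcess P W)
    (X : ℝ → ℝ → Ω → ℝ)
    (hXc : ∀ ε : ℝ, 0 < ε → ∀ ω, Continuous fun t => X ε t ω)
    (hXmeas : ∀ ε t : ℝ, Measurable fun ω => X ε t ω)
    (hXinit : ∀ ε : ℝ, 0 < ε → ∀ ω, ∀ s : ℝ, s ≤ 0 → X ε s ω = x₀)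
    (hXeq : ∀ ε : ℝ, 0 < ε → ∀ ω, ∀ t ∈ Icc (0 : ℝ) T,
      X ε t ω = x₀ + (∫ s in (0 : ℝ)..t, S (X ε (s - ϑ₀) ω)) + ε * W t ω)
    (x : ℝ → ℝ)
    (hxinit : ∀ s : ℝ, s ≤ 0 → x s = x₀)
    (hxeq : ∀ t ∈ Icc (0 : ℝ) T, x t = x₀ + ∫ s in (0 : ℝ)..t, S (x (s - ϑ₀)))
    (x1 : ℝ → Ω → ℝ) (hx1meas : ∀ t, Measurable (x1 t))
    (hx1init : ∀ ω, ∀ s : ℝ, s ≤ 0 → x1 s ω = 0)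
    (hx1eq : ∀ ω, ∀ t ∈ Icc (0 : ℝ) T,
      x1 t ω = (∫ s in (0 : ℝ)..t, deriv S (x (s - ϑ₀)) * x1 (s - ϑ₀) ω) + W t ω) :
    ∀ t ∈ Icc (0 : ℝ) T,
      Tendsto (fun ε : ℝ => ∫ ω, ((X ε t ω - x t) / ε - x1 t ω) ^ 2 ∂P)
        (nhdsWithin 0 (Ioi 0)) (nhds 0) :=
  first_order_L2_expansion_general P S hS L M hL hM T ϑ₀ x₀ hT hϑ W hW X hXinit hXeq x hxinit hxeq
    x1 hx1init hx1eq
end
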